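/- For a symmetric PSD matrix A and a symmetric matrix S, the relation (1+δ)^{-1} A⁺ ⪯ S ⪯ (1+δ) A⁺ (with δ > 0, S PSD, and Range(S) = Range(A⁺)) holds if and only if (1+δ)^{-1} A ⪯ S⁺ ⪯ (1+δ) A. -/

import Mathlib

open Matrix

/-- `Ap` is the Moore–Penrose pseudoinverse of `A` (the four Penrose conditions). -/
def IsMoorePenroseInv {n : ℕ} (A Ap : Matrix (Fin n) (Fin n) ℝ) : Prop :=
  A * Ap * A = A ∧ Ap * A * Ap = Ap ∧ (A * Ap)ᵀ = A * Ap ∧ (Ap * A)ᵀ = Ap * A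

/-- Loewner order on real symmetric matrices: domination of quadratic forms. -/
def LoewnerLE {n : ℕ} (M N : Matrix (Fin n) (Fin n) ℝ) : Prop :=
  ∀ z : Fin n → ℝ, z ⬝ᵥ M.mulVec z ≤ z ⬝ᵥ N.mulVec z

/-!
The map `M ↦ M⁺` is antitone for the Loewner order among PSD matrices with a common range.
Writing `P = M M⁺ = N N⁺` for the orthogonal projection onto that range, completing the square
gives `y ⬝ M⁺ y = max_w (2 (P y) ⬝ w - w ⬝ M w)`, the maximum being attained at `w = M⁺ y`.
Hence `M ⪯ N` gives `N⁺ ⪯ M⁺`. Since `(c • M)⁺ = c⁻¹ • M⁺` and `(M⁺)⁺ = M`, this turns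
`c⁻¹ B ⪯ T ⪯ c B` into `c⁻¹ B⁺ ⪯ T⁺ ⪯ c B⁺`; take `(B, T) = (A⁺, S)` for one direction and
`(B, T) = (A, S⁺)` for the other.
-/

theorem Matrix.IsSymm.mulVec_dotProduct {m R : Type*} [Fintype m] [CommSemiring R]
    {P : Matrix m m R} (hP : P.IsSymm) (u v : m → R) : P *ᵥ u ⬝ᵥ v = u ⬝ᵥ P *ᵥ v := by
  rw [dotProduct_mulVec, ← mulVec_transpose, hP]

theorem Matrix.PosSemidef.isSymm {m : Type*} [Fintype m] {M : Matrix m m ℝ}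
    (hM : M.PosSemidef) : M.IsSymm :=
  isHermitian_iff_isSymm.mp hM.1

namespace IsMoorePenroseInv

variable {n : ℕ} {A Ap B : Matrix (Fin n) (Fin n) ℝ}

theorem symm (h : IsMoorePenroseInv A Ap) : IsMoorePenroseInv Ap A :=
  ⟨h.2.1, h.1, h.2.2.2, h.2.2.1⟩

theorem unique (h : IsMoorePenroseInv A Ap) (h' : IsMoorePenroseInv A B) : Ap = B := by
  obtain ⟨a1, a2, a3, a4⟩ := h
  obtain ⟨b1, b2, b3, b4⟩ := h'
  have hleft : A * Ap = A * B := by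
    calc A * Ap = (A * Ap)ᵀ := a3.symm
      _ = ((A * B) * (A * Ap))ᵀ := by rw [← Matrix.mul_assoc, b1]
      _ = (A * Ap) * (A * B) := by rw [transpose_mul, a3, b3]
      _ = A * B := by rw [← Matrix.mul_assoc, a1]
  have hright : Ap * A = B * A := by
    calc Ap * A = (Ap * A)ᵀ := a4.symm
      _ = ((Ap * A) * (B * A))ᵀ := by rw [Matrix.mul_assoc, ← Matrix.mul_assoc A, b1]
      _ = (B * A) * (Ap * A) := by rw [transpose_mul, a4, b4]
      _ = B * A := by rw [Matrix.mul_assoc, ← Matrix.mul_assoc A, a1]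
  calc Ap = Ap * A * Ap := a2.symm
    _ = B * (A * B) := by rw [hright, Matrix.mul_assoc, hleft]
    _ = B := by rw [← Matrix.mul_assoc, b2]

theorem transpose (h : IsMoorePenroseInv A Ap) : IsMoorePenroseInv Aᵀ Apᵀ := by
  refine ⟨?_, ?_, ?_, ?_⟩
  · simpa [transpose_mul, Matrix.mul_assoc] using congrArg Matrix.transpose h.1
  · simpa [transpose_mul, Matrix.mul_assoc] using congrArg Matrix.transpose h.2.1
  · rw [← transpose_mul, h.2.2.2, h.2.2.2]
  · rw [← transpose_mul, h.2.2.1, h.2.2.1]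

theorem isSymm (hA : A.IsSymm) (h : IsMoorePenroseInv A Ap) : Ap.IsSymm := by
  have ht := h.transpose
  rw [hA.eq] at ht
  exact (h.unique ht).symm

theorem smul {c : ℝ} (hc : c ≠ 0) (h : IsMoorePenroseInv A Ap) :
    IsMoorePenroseInv (c • A) (c⁻¹ • Ap) := by
  obtain ⟨a1, a2, a3, a4⟩ := h
  refine ⟨?_, ?_, ?_, ?_⟩
  · rw [smul_mul_smul_comm, mul_inv_cancel₀ hc, one_smul, Matrix.mul_smul, a1]
  · rw [smul_mul_smul_comm, inv_mul_cancel₀ hc, one_smul, Matrix.mul_smul, a2]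
  · rw [smul_mul_smul_comm, mul_inv_cancel₀ hc, one_smul, a3]
  · rw [smul_mul_smul_comm, inv_mul_cancel₀ hc, one_smul, a4]

theorem range_mulVec_eq (hA : A.IsSymm) (h : IsMoorePenroseInv A Ap) :
    Set.range Ap.mulVec = Set.range A.mulVec := by
  have hcomm : Ap * A = A * Ap := by
    rw [← h.2.2.2, transpose_mul, hA.eq, (h.isSymm hA).eq]
  apply Set.Subset.antisymm
  · rintro _ ⟨z, rfl⟩
    exact ⟨(Ap * Ap) *ᵥ z, by rw [mulVec_mulVec, ← Matrix.mul_assoc, ← hcomm, h.2.1]⟩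
  · rintro _ ⟨z, rfl⟩
    exact ⟨(A * A) *ᵥ z, by rw [mulVec_mulVec, ← Matrix.mul_assoc, hcomm, h.1]⟩

theorem mul_mul_of_range_subset {M : Matrix (Fin n) (Fin n) ℝ} (h : IsMoorePenroseInv A Ap)
    (hM : Set.range M.mulVec ⊆ Set.range A.mulVec) : A * Ap * M = M := by
  refine ext_iff_mulVec.mpr fun v => ?_
  obtain ⟨x, hx⟩ := hM ⟨v, rfl⟩
  rw [← mulVec_mulVec, ← hx, mulVec_mulVec, h.1]

theorem mul_eq_mul_of_range_eq {Bp : Matrix (Fin n) (Fin n) ℝ} (hA : IsMoorePenroseInv A Ap)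
    (hB : IsMoorePenroseInv B Bp) (hrange : Set.range A.mulVec = Set.range B.mulVec) :
    A * Ap = B * Bp := by
  have hAB : B * Bp * (A * Ap) = A * Ap := by
    rw [← Matrix.mul_assoc, hB.mul_mul_of_range_subset hrange.subset]
  have hBA : A * Ap * (B * Bp) = B * Bp := by
    rw [← Matrix.mul_assoc, hA.mul_mul_of_range_subset hrange.symm.subset]
  calc A * Ap = (B * Bp * (A * Ap))ᵀ := by rw [hAB, hA.2.2.1]
    _ = B * Bp := by rw [transpose_mul, hA.2.2.1, hB.2.2.1, hBA]

theorem dotProduct_mulVec_pinv (hA : A.IsSymm) (h : IsMoorePenroseInv A Ap) (z : Fin n → ℝ) :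
    Ap *ᵥ z ⬝ᵥ A *ᵥ (Ap *ᵥ z) = z ⬝ᵥ Ap *ᵥ z := by
  rw [(h.isSymm hA).mulVec_dotProduct, mulVec_mulVec, mulVec_mulVec, h.2.1]

theorem posSemidef (hA : A.PosSemidef) (h : IsMoorePenroseInv A Ap) : Ap.PosSemidef :=
  .of_dotProduct_mulVec_nonneg (isHermitian_iff_isSymm.mpr (h.isSymm hA.isSymm)) fun z => by
    have hq := hA.dotProduct_mulVec_nonneg (Ap *ᵥ z)
    rwa [star_trivial, h.dotProduct_mulVec_pinv hA.isSymm] at hq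

theorem two_mul_dotProduct_sub_le (hA : A.PosSemidef) (h : IsMoorePenroseInv A Ap)
    (y w : Fin n → ℝ) : 2 * ((A * Ap) *ᵥ y ⬝ᵥ w) - w ⬝ᵥ A *ᵥ w ≤ y ⬝ᵥ Ap *ᵥ y := by
  have hsq := hA.dotProduct_mulVec_nonneg (Ap *ᵥ y - w)
  have hcross₁ : Ap *ᵥ y ⬝ᵥ A *ᵥ w = (A * Ap) *ᵥ y ⬝ᵥ w := by
    rw [← hA.isSymm.mulVec_dotProduct, mulVec_mulVec]
  have hcross₂ : w ⬝ᵥ A *ᵥ (Ap *ᵥ y) = (A * Ap) *ᵥ y ⬝ᵥ w := by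
    rw [dotProduct_comm, mulVec_mulVec]
  rw [star_trivial, mulVec_sub, sub_dotProduct, dotProduct_sub, dotProduct_sub,
    h.dotProduct_mulVec_pinv hA.isSymm, hcross₁, hcross₂] at hsq
  linarith

end IsMoorePenroseInv

theorem LoewnerLE.pinv_anti {n : ℕ} {M N Mp Np : Matrix (Fin n) (Fin n) ℝ}
    (hM : M.PosSemidef) (hN : N.IsSymm) (hMp : IsMoorePenroseInv M Mp)
    (hNp : IsMoorePenroseInv N Np) (hproj : M * Mp = N * Np) (hle : LoewnerLE M N) :
    LoewnerLE Np Mp := by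
  intro z
  calc z ⬝ᵥ Np *ᵥ z
      = 2 * ((N * Np) *ᵥ z ⬝ᵥ Np *ᵥ z) - Np *ᵥ z ⬝ᵥ N *ᵥ (Np *ᵥ z) := by
        rw [← mulVec_mulVec, dotProduct_comm (N *ᵥ _), hNp.dotProduct_mulVec_pinv hN]
        ring
    _ ≤ 2 * ((M * Mp) *ᵥ z ⬝ᵥ Np *ᵥ z) - Np *ᵥ z ⬝ᵥ M *ᵥ (Np *ᵥ z) := by
        rw [hproj]
        linarith [hle (Np *ᵥ z)]
    _ ≤ z ⬝ᵥ Mp *ᵥ z := hMp.two_mul_dotProduct_sub_le hM z _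

theorem LoewnerLE.pinv_of_le_of_le {n : ℕ} {A Ap S Sp : Matrix (Fin n) (Fin n) ℝ}
    (hA : A.PosSemidef) (hAp : IsMoorePenroseInv A Ap)
    (hS : S.PosSemidef) (hSp : IsMoorePenroseInv S Sp)
    (hrange : Set.range S.mulVec = Set.range A.mulVec) {c : ℝ} (hc : 0 < c)
    (hlow : LoewnerLE (c⁻¹ • A) S) (hup : LoewnerLE S (c • A)) :
    LoewnerLE (c⁻¹ • Ap) Sp ∧ LoewnerLE Sp (c • Ap) := by
  have hproj : S * Sp = A * Ap := hSp.mul_eq_mul_of_range_eq hAp hrange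
  have hscaled : IsMoorePenroseInv (c⁻¹ • A) (c • Ap) := by
    simpa using hAp.smul (inv_ne_zero hc.ne')
  refine ⟨hup.pinv_anti hS (hA.isSymm.smul c) hSp (hAp.smul hc.ne') ?_,
    hlow.pinv_anti (hA.smul (inv_nonneg.mpr hc.le)) hS.isSymm hscaled hSp ?_⟩
  · rw [hproj, smul_mul_smul_comm, mul_inv_cancel₀ hc.ne', one_smul]
  · rw [hproj, smul_mul_smul_comm, inv_mul_cancel₀ hc.ne', one_smul]

theorem stmt_7 {n : ℕ} (A Ap S Sp : Matrix (Fin n) (Fin n) ℝ)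
    (hA : A.PosSemidef) (hAp : IsMoorePenroseInv A Ap)
    (hS : S.PosSemidef) (hSp : IsMoorePenroseInv S Sp)
    (hrange : Set.range S.mulVec = Set.range Ap.mulVec)
    (δ : ℝ) (hδ : 0 < δ) :
    (LoewnerLE ((1 + δ)⁻¹ • Ap) S ∧ LoewnerLE S ((1 + δ) • Ap)) ↔
      (LoewnerLE ((1 + δ)⁻¹ • A) Sp ∧ LoewnerLE Sp ((1 + δ) • A)) := by
  have hc : 0 < 1 + δ := by linarith
  have hrange' : Set.range Sp.mulVec = Set.range A.mulVec := by
    rw [hSp.range_mulVec_eq hS.isSymm, hrange, hAp.range_mulVec_eq hA.isSymm]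
  exact ⟨fun h => LoewnerLE.pinv_of_le_of_le (hAp.posSemidef hA) hAp.symm hS hSp hrange hc h.1 h.2,
    fun h => LoewnerLE.pinv_of_le_of_le hA hAp (hSp.posSemidef hS) hSp.symm hrange' hc h.1 h.2⟩
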